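/- arXiv:2603.00322 — 2 statements merged into one kernel-verified Lean document; each statement's English description precedes it below -/
import Mathlib

section
/- For all real d×d positive semidefinite matrices A and B, Tr[(A^{1/2} B A^{1/2})^{1/2}] ≤ (Tr A + Tr B)/2; equivalently, the squared Bures distance d_B²(A,B) = Tr[A + B − 2 (A^{1/2} B A^{1/2})^{1/2}] is nonnegative. -/
open MeasureTheory ProbabilityTheory Matrix
open scoped Classical

/-- The unique positive semidefinite square root of a positive semidefinite real matrix
(junk value `0` if the matrix is not positive semidefinite). -/
noncomputable def psdSqrt {d : ℕ} (M : Matrix (Fin d) (Fin d) ℝ) : Matrix (Fin d) (Fin d) ℝ :=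
  if h : M.PosSemidef then
    h.1.eigenvectorUnitary.1 * diagonal ((↑) ∘ (√·) ∘ h.1.eigenvalues) *
      (star h.1.eigenvectorUnitary : Matrix (Fin d) (Fin d) ℝ)
  else 0

/-- The squared Bures distance `Tr[A + B − 2 (A^{1/2} B A^{1/2})^{1/2}]`. -/
noncomputable def buresSq {d : ℕ} (A B : Matrix (Fin d) (Fin d) ℝ) : ℝ :=
  (A + B - 2 • psdSqrt (psdSqrt A * B * psdSqrt A)).trace

/-!
Write `X = A^{1/2}`, `Y = B^{1/2}`, so that `S = (X B X)^{1/2}` is the modulus `|Y X|`. Polar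
decomposition gives a contraction `Z` with `Zᴴ Y X = S`, namely `Z = Y X S⁺` for the pseudo-inverse
`S⁺`. Then `Tr S = ⟨Z Xᴴ, Y⟩` for the Frobenius inner product, and `2 ⟨Z Xᴴ, Y⟩ ≤ ‖Z Xᴴ‖² + ‖Y‖²
≤ Tr A + Tr B`.
-/

open scoped MatrixOrder ComplexOrder

namespace Matrix

variable {n 𝕜 : Type*} [Fintype n] [DecidableEq n] [RCLike 𝕜]

lemma IsHermitian.exists_conjTranspose_mul_eq_of_mul_self_eq {S M : Matrix n n 𝕜}
    (hS : S.IsHermitian) (h : S * S = Mᴴ * M) :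
    ∃ Z : Matrix n n 𝕜, Zᴴ * M = S ∧ (1 - Zᴴ * Z).PosSemidef := by
  have hcont (f : ℝ → ℝ) : ContinuousOn f (spectrum ℝ S) := S.finite_real_spectrum.continuousOn f
  have hS' : IsSelfAdjoint S := hS
  -- `R` is the Moore–Penrose pseudo-inverse of `S`, since `0⁻¹ = 0` in `ℝ`.
  set R := cfc (·⁻¹ : ℝ → ℝ) S
  have hRH : Rᴴ = R := (cfc_predicate (·⁻¹ : ℝ → ℝ) S).star_eq
  have hRSS : R * (S * S) = S := by
    calc R * (S * S) = cfc (fun x : ℝ => x⁻¹ * x * x) S := by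
          rw [cfc_mul (fun x : ℝ => x⁻¹ * x) (fun x => x) S (hcont _) (hcont _),
            cfc_mul (·⁻¹ : ℝ → ℝ) (fun x => x) S (hcont _) (hcont _), cfc_id' ℝ S, mul_assoc]
      _ = cfc (fun x : ℝ => x) S := cfc_congr fun x _ => by
          rcases eq_or_ne x 0 with rfl | hx <;> simp [*]
      _ = S := cfc_id' ℝ S
  have hSR : 1 - S * R = cfc (fun x : ℝ => 1 - x * x⁻¹) S := by
    rw [cfc_sub (fun _ => (1 : ℝ)) (fun x : ℝ => x * x⁻¹) S (hcont _) (hcont _),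
      cfc_const_one ℝ S, cfc_mul (fun x : ℝ => x) (·⁻¹ : ℝ → ℝ) S (hcont _) (hcont _),
      cfc_id' ℝ S]
  refine ⟨M * R, ?_, ?_⟩
  · rw [conjTranspose_mul, hRH, mul_assoc, ← h, hRSS]
  · rw [conjTranspose_mul, hRH, mul_assoc, ← mul_assoc Mᴴ, ← h, ← mul_assoc, hRSS, hSR,
      ← nonneg_iff_posSemidef]
    exact cfc_nonneg fun x _ => by rcases eq_or_ne x 0 with rfl | hx <;> simp [*]

lemma IsHermitian.two_mul_trace_le_of_mul_self_eq {S X Y : Matrix n n 𝕜} (hS : S.IsHermitian)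
    (h : S * S = (Y * X)ᴴ * (Y * X)) :
    2 * S.trace ≤ (X * Xᴴ).trace + (Yᴴ * Y).trace := by
  obtain ⟨Z, hZ, hZZ⟩ := hS.exists_conjTranspose_mul_eq_of_mul_self_eq h
  have hXZY : (X * Zᴴ * Y).trace = S.trace := by
    rw [mul_assoc, trace_mul_comm, mul_assoc, hZ]
  have hYZX : (Yᴴ * Z * Xᴴ).trace = S.trace := by
    rw [← hS.eq, trace_conjTranspose, ← hXZY, ← trace_conjTranspose]
    simp only [conjTranspose_mul, conjTranspose_conjTranspose, mul_assoc]
  have hdefect : (X * Xᴴ).trace + (Yᴴ * Y).trace - 2 * S.trace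
      = ((Z * Xᴴ - Y)ᴴ * (Z * Xᴴ - Y)).trace + (X * (1 - Zᴴ * Z) * Xᴴ).trace := by
    simp only [conjTranspose_sub, conjTranspose_mul, conjTranspose_conjTranspose, sub_mul, mul_sub,
      mul_one, trace_sub, mul_assoc] at hXZY hYZX ⊢
    linear_combination hXZY + hYZX
  rw [← sub_nonneg, hdefect]
  exact add_nonneg (posSemidef_conjTranspose_mul_self _).trace_nonneg
    (hZZ.mul_mul_conjTranspose_same X).trace_nonneg

end Matrix

lemma psdSqrt_eq_sqrt {d : ℕ} {M : Matrix (Fin d) (Fin d) ℝ} (hM : M.PosSemidef) :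
    psdSqrt M = CFC.sqrt M := by
  rw [CFC.sqrt_eq_real_sqrt M hM.nonneg, cfcₙ_eq_cfc, hM.1.cfc_eq, psdSqrt, dif_pos hM]
  rfl

lemma posSemidef_psdSqrt {d : ℕ} {M : Matrix (Fin d) (Fin d) ℝ} (hM : M.PosSemidef) :
    (psdSqrt M).PosSemidef := by
  rw [psdSqrt_eq_sqrt hM, ← nonneg_iff_posSemidef]
  exact CFC.sqrt_nonneg M

lemma psdSqrt_mul_self {d : ℕ} {M : Matrix (Fin d) (Fin d) ℝ} (hM : M.PosSemidef) :
    psdSqrt M * psdSqrt M = M := by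
  rw [psdSqrt_eq_sqrt hM]
  exact CFC.sqrt_mul_sqrt_self M hM.nonneg

/-- for PSD matrices `A, B`,
`Tr[(A^{1/2} B A^{1/2})^{1/2}] ≤ (Tr A + Tr B)/2`; equivalently `d_B²(A,B) ≥ 0`. -/
theorem stmt1 (d : ℕ) (A B : Matrix (Fin d) (Fin d) ℝ)
    (hA : A.PosSemidef) (hB : B.PosSemidef) :
    (psdSqrt (psdSqrt A * B * psdSqrt A)).trace ≤ (A.trace + B.trace) / 2 ∧
    0 ≤ buresSq A B := by
  set X := psdSqrt A
  set Y := psdSqrt B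
  have hX : Xᴴ = X := (posSemidef_psdSqrt hA).1
  have hY : Yᴴ = Y := (posSemidef_psdSqrt hB).1
  have hXBX : (X * B * X).PosSemidef := by
    have := hB.mul_mul_conjTranspose_same X
    rwa [hX] at this
  have hmodulus : psdSqrt (X * B * X) * psdSqrt (X * B * X) = (Y * X)ᴴ * (Y * X) := by
    rw [psdSqrt_mul_self hXBX, conjTranspose_mul, hX, hY, ← psdSqrt_mul_self hB]
    noncomm_ring
  have htrace := (posSemidef_psdSqrt hXBX).1.two_mul_trace_le_of_mul_self_eq hmodulus
  rw [hX, hY, psdSqrt_mul_self hA, psdSqrt_mul_self hB] at htrace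
  refine ⟨by linarith, ?_⟩
  rw [buresSq, trace_sub, trace_add, trace_smul, nsmul_eq_mul, Nat.cast_ofNat]
  linarith
end

section
/- Let P and Q be Borel probability measures on ℝ with finite second moments, with cumulative distribution functions F_P and F_Q and quantile functions q_P(p) = inf{x ∈ ℝ : F_P(x) ≥ p} and q_Q(p) = inf{x ∈ ℝ : F_Q(x) ≥ p} for p ∈ (0,1). Then the squared 2-Wasserstein distance satisfies d_W²(P,Q) = ∫_0^1 (q_P(p) − q_Q(p))² dp. -/
/-!
The quantile coupling `p ↦ (q_P(p), q_Q(p))` of Lebesgue measure on `(0,1)` has marginals `P`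
and `Q`, because `q_P(p) ≤ x ↔ p ≤ F_P(x)`, and it gives `(-∞, s] × (-∞, t]` the mass
`min (F_P s) (F_Q t)`, the largest mass any coupling can give it. The cost of a coupling is
`E X² + E Y² - 2 E[XY]`, so it suffices that the quantile coupling maximizes `E[XY]`. Writing
`x = ∫ (1{0 ≤ s} - 1{x ≤ s}) ds` gives Hoeffding's formula
`E[XY] = ∫∫ E[(1{0 ≤ s} - 1{X ≤ s}) (1{0 ≤ t} - 1{Y ≤ t})] ds dt`, whose integrand depends on the
coupling only through the mass of `(-∞, s] × (-∞, t]`.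
-/

open MeasureTheory ProbabilityTheory Matrix
open scoped Classical

/-- Squared 2-Wasserstein distance between Borel probability measures on ℝ:
the infimum over couplings `γ` of `∫ |x − y|² dγ`. -/
noncomputable def W2sq (P Q : Measure ℝ) : ℝ :=
  sInf { r : ℝ | ∃ γ : Measure (ℝ × ℝ), IsProbabilityMeasure γ ∧
    γ.map Prod.fst = P ∧ γ.map Prod.snd = Q ∧ r = ∫ p, (p.1 - p.2) ^ 2 ∂γ }

/-- Cumulative distribution function of a measure on ℝ: `F_P(x) = P((−∞, x])`. -/
noncomputable def cdfOf (P : Measure ℝ) (x : ℝ) : ℝ := (P (Set.Iic x)).toReal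

/-- Quantile function `q_P(p) = inf {x ∈ ℝ : F_P(x) ≥ p}`. -/
noncomputable def quantileOf (P : Measure ℝ) (p : ℝ) : ℝ := sInf { x : ℝ | p ≤ cdfOf P x }

open Set Filter

instance isProbabilityMeasure_restrict_Ioo_zero_one :
    IsProbabilityMeasure (volume.restrict (Ioo (0 : ℝ) 1)) :=
  ⟨by simp⟩

lemma volume_Iic_inter_Ioo_zero_one {c : ℝ} (hc : c ≤ 1) :
    volume (Iic c ∩ Ioo 0 1) = ENNReal.ofReal c := by
  refine le_antisymm ?_ ?_
  · calc volume (Iic c ∩ Ioo 0 1) ≤ volume (Ioc 0 c) := measure_mono fun p hp => ⟨hp.2.1, hp.1⟩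
      _ = ENNReal.ofReal c := by simp
  · calc ENNReal.ofReal c = volume (Ioo 0 c) := by simp
      _ ≤ volume (Iic c ∩ Ioo 0 1) := measure_mono fun p hp => ⟨hp.2.le, hp.1, hp.2.trans_le hc⟩

section Quantile

variable {P : Measure ℝ} [IsProbabilityMeasure P] {p : ℝ}

lemma cdfOf_eq_cdf : cdfOf P = cdf P := by
  funext x
  rw [cdfOf, cdf_eq_real, measureReal_def]

lemma monotone_cdfOf : Monotone (cdfOf P) := cdfOf_eq_cdf (P := P) ▸ monotone_cdf P

lemma bddBelow_setOf_le_cdfOf (hp : 0 < p) : BddBelow {x | p ≤ cdfOf P x} := by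
  obtain ⟨z, hz⟩ := eventually_atBot.1 ((tendsto_cdf_atBot P).eventually (eventually_lt_nhds hp))
  refine ⟨z, fun y hy => le_of_not_gt fun hyz => ?_⟩
  rw [cdfOf_eq_cdf] at hy
  exact (lt_of_le_of_lt hy (hz y hyz.le)).false

lemma nonempty_setOf_le_cdfOf (hp : p < 1) : {x | p ≤ cdfOf P x}.Nonempty := by
  rw [cdfOf_eq_cdf]
  exact ((tendsto_cdf_atTop P).eventually (eventually_ge_nhds hp)).exists

lemma le_cdfOf_quantileOf (hp : p ∈ Ioo 0 1) : p ≤ cdfOf P (quantileOf P p) := by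
  have hcont : ContinuousWithinAt (cdfOf P) (Ioi (quantileOf P p)) (quantileOf P p) :=
    cdfOf_eq_cdf (P := P) ▸ ((cdf P).right_continuous _).mono Ioi_subset_Ici_self
  refine ge_of_tendsto hcont (eventually_nhdsWithin_of_forall fun y hy => ?_)
  obtain ⟨z, hz, hzy⟩ := exists_lt_of_csInf_lt (nonempty_setOf_le_cdfOf hp.2) hy
  exact le_trans hz (monotone_cdfOf hzy.le)

lemma quantileOf_le_iff (hp : p ∈ Ioo 0 1) {x : ℝ} : quantileOf P p ≤ x ↔ p ≤ cdfOf P x :=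
  ⟨fun h => (le_cdfOf_quantileOf hp).trans (monotone_cdfOf h),
    fun h => csInf_le (bddBelow_setOf_le_cdfOf hp.1) h⟩

lemma monotoneOn_quantileOf : MonotoneOn (quantileOf P) (Ioo 0 1) :=
  fun _ ha _ hb hab => (quantileOf_le_iff ha).2 (hab.trans ((quantileOf_le_iff hb).1 le_rfl))

lemma aemeasurable_quantileOf : AEMeasurable (quantileOf P) (volume.restrict (Ioo 0 1)) :=
  aemeasurable_restrict_of_monotoneOn measurableSet_Ioo monotoneOn_quantileOf

lemma preimage_quantileOf_Iic_inter_Ioo (x : ℝ) :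
    quantileOf P ⁻¹' Iic x ∩ Ioo 0 1 = Iic (cdfOf P x) ∩ Ioo 0 1 := by
  ext p
  exact and_congr_left fun hp => quantileOf_le_iff hp

lemma map_quantileOf : (volume.restrict (Ioo 0 1)).map (quantileOf P) = P := by
  refine Measure.ext_of_Iic _ _ fun x => ?_
  rw [Measure.map_apply_of_aemeasurable aemeasurable_quantileOf measurableSet_Iic,
    Measure.restrict_apply' measurableSet_Ioo, preimage_quantileOf_Iic_inter_Ioo,
    volume_Iic_inter_Ioo_zero_one (cdfOf_eq_cdf (P := P) ▸ cdf_le_one P x), cdfOf,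
    ENNReal.ofReal_toReal (measure_ne_top _ _)]

end Quantile

lemma measure_prod_le_min_map {α β : Type*} [MeasurableSpace α] [MeasurableSpace β]
    (γ : Measure (α × β)) (A : Set α) (B : Set β) :
    γ (A ×ˢ B) ≤ min (γ.map Prod.fst A) (γ.map Prod.snd B) :=
  le_min ((measure_mono (prod_subset_preimage_fst A B)).trans
      (Measure.le_map_apply measurable_fst.aemeasurable A))
    ((measure_mono (prod_subset_preimage_snd A B)).trans
      (Measure.le_map_apply measurable_snd.aemeasurable B))

noncomputable def quantileCoupling (P Q : Measure ℝ) : Measure (ℝ × ℝ) :=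
  (volume.restrict (Ioo 0 1)).map fun p => (quantileOf P p, quantileOf Q p)

section QuantileCoupling

variable {P Q : Measure ℝ} [IsProbabilityMeasure P] [IsProbabilityMeasure Q]

lemma aemeasurable_quantileOf_prodMk :
    AEMeasurable (fun p => (quantileOf P p, quantileOf Q p)) (volume.restrict (Ioo 0 1)) :=
  aemeasurable_quantileOf.prodMk aemeasurable_quantileOf

instance : IsProbabilityMeasure (quantileCoupling P Q) :=
  Measure.isProbabilityMeasure_map aemeasurable_quantileOf_prodMk

lemma map_fst_quantileCoupling : (quantileCoupling P Q).map Prod.fst = P := by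
  rw [quantileCoupling, AEMeasurable.map_map_of_aemeasurable measurable_fst.aemeasurable
    aemeasurable_quantileOf_prodMk]
  exact map_quantileOf

lemma map_snd_quantileCoupling : (quantileCoupling P Q).map Prod.snd = Q := by
  rw [quantileCoupling, AEMeasurable.map_map_of_aemeasurable measurable_snd.aemeasurable
    aemeasurable_quantileOf_prodMk]
  exact map_quantileOf

lemma quantileCoupling_Iic_prod_Iic (s t : ℝ) :
    quantileCoupling P Q (Iic s ×ˢ Iic t) = min (P (Iic s)) (Q (Iic t)) := by
  have hpre : (fun p => (quantileOf P p, quantileOf Q p)) ⁻¹' (Iic s ×ˢ Iic t) ∩ Ioo 0 1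
      = Iic (min (cdfOf P s) (cdfOf Q t)) ∩ Ioo 0 1 := by
    ext p
    simp only [mem_inter_iff, mem_preimage, mem_prod, mem_Iic, le_min_iff]
    exact and_congr_left fun hp => and_congr (quantileOf_le_iff hp) (quantileOf_le_iff hp)
  rw [quantileCoupling, Measure.map_apply_of_aemeasurable aemeasurable_quantileOf_prodMk
      (measurableSet_Iic.prod measurableSet_Iic), Measure.restrict_apply' measurableSet_Ioo, hpre,
    volume_Iic_inter_Ioo_zero_one (min_le_of_left_le (cdfOf_eq_cdf (P := P) ▸ cdf_le_one P s)),
    ENNReal.ofReal_min, cdfOf, cdfOf, ENNReal.ofReal_toReal (measure_ne_top _ _),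
    ENNReal.ofReal_toReal (measure_ne_top _ _)]

lemma le_quantileCoupling_Iic_prod_Iic {γ : Measure (ℝ × ℝ)} (h₁ : γ.map Prod.fst = P)
    (h₂ : γ.map Prod.snd = Q) (s t : ℝ) :
    γ (Iic s ×ˢ Iic t) ≤ quantileCoupling P Q (Iic s ×ˢ Iic t) := by
  rw [quantileCoupling_Iic_prod_Iic, ← h₁, ← h₂]
  exact measure_prod_le_min_map γ _ _

end QuantileCoupling

noncomputable def layer (x s : ℝ) : ℝ := (if 0 ≤ s then 1 else 0) - (if x ≤ s then 1 else 0)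

lemma layer_eq_indicator_sub_indicator (x : ℝ) :
    layer x = (Ico 0 x).indicator 1 - (Ico x 0).indicator 1 := by
  funext s
  by_cases h0 : 0 ≤ s <;> by_cases hx : x ≤ s <;> simp [layer, indicator_apply, h0, hx]

lemma abs_layer (x : ℝ) :
    (fun s => |layer x s|) = (Ico 0 x).indicator 1 + (Ico x 0).indicator 1 := by
  funext s
  rcases le_total 0 x with h | h <;>
    simp [layer_eq_indicator_sub_indicator, Ico_eq_empty_of_le h, indicator_apply] <;>
    split_ifs <;> norm_num

lemma measurable_layer : Measurable fun p : ℝ × ℝ => layer p.1 p.2 := by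
  unfold layer
  exact (Measurable.ite (measurableSet_le measurable_const measurable_snd) measurable_const
    measurable_const).sub (Measurable.ite (measurableSet_le measurable_fst measurable_snd)
    measurable_const measurable_const)

lemma integrable_indicator_Ico_one (a b : ℝ) : Integrable ((Ico a b).indicator (1 : ℝ → ℝ)) :=
  (integrable_indicator_iff measurableSet_Ico).2 (integrableOn_const (by simp))

lemma integrable_layer (x : ℝ) : Integrable (layer x) := by
  rw [layer_eq_indicator_sub_indicator]
  exact (integrable_indicator_Ico_one _ _).sub (integrable_indicator_Ico_one _ _)

lemma integral_layer (x : ℝ) : ∫ s, layer x s = x := by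
  rw [layer_eq_indicator_sub_indicator, integral_sub' (integrable_indicator_Ico_one _ _)
    (integrable_indicator_Ico_one _ _), integral_indicator_one measurableSet_Ico,
    integral_indicator_one measurableSet_Ico, Real.volume_real_Ico, Real.volume_real_Ico,
    sub_zero, zero_sub, max_zero_sub_max_neg_zero_eq_self]

lemma integral_abs_layer (x : ℝ) : ∫ s, |layer x s| = |x| := by
  rw [abs_layer, integral_add' (integrable_indicator_Ico_one _ _)
    (integrable_indicator_Ico_one _ _), integral_indicator_one measurableSet_Ico,
    integral_indicator_one measurableSet_Ico, Real.volume_real_Ico, Real.volume_real_Ico,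
    sub_zero, zero_sub, max_zero_add_max_neg_zero_eq_abs_self]

lemma layer_eq_sub_indicator (x s : ℝ) :
    layer x s = (if 0 ≤ s then 1 else 0) - (Iic s).indicator 1 x := by
  by_cases hx : x ≤ s <;> simp [layer, hx]

lemma integral_sub_indicator_mul_sub_indicator {α β : Type*} [MeasurableSpace α]
    [MeasurableSpace β] (γ : Measure (α × β)) [IsFiniteMeasure γ] (a b : ℝ) {A : Set α}
    {B : Set β} (hA : MeasurableSet A) (hB : MeasurableSet B) :
    ∫ ω, (a - A.indicator 1 ω.1) * (b - B.indicator 1 ω.2) ∂γ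
      = γ.real (A ×ˢ B) + a * b * γ.real univ - a * (γ.map Prod.snd).real B
        - b * (γ.map Prod.fst).real A := by
  have hindicator {S : Set (α × β)} (hS : MeasurableSet S) :
      Integrable (S.indicator (1 : α × β → ℝ)) γ :=
    (integrable_const (1 : ℝ)).indicator hS
  have iAB := hindicator (hA.prod hB)
  have iA := (hindicator (measurable_fst hA)).const_mul b
  have iB := (hindicator (measurable_snd hB)).const_mul a
  have hexpand : ∀ ω : α × β, (a - A.indicator 1 ω.1) * (b - B.indicator 1 ω.2)
      = (A ×ˢ B).indicator 1 ω + a * b - a * (Prod.snd ⁻¹' B).indicator 1 ω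
        - b * (Prod.fst ⁻¹' A).indicator 1 ω := by
    intro ω
    by_cases h₁ : ω.1 ∈ A <;> by_cases h₂ : ω.2 ∈ B <;> simp [h₁, h₂] <;> ring
  simp_rw [hexpand]
  rw [integral_sub ((iAB.fun_add (integrable_const _)).sub' iB) iA,
    integral_sub (iAB.fun_add (integrable_const _)) iB, integral_add iAB (integrable_const _),
    integral_indicator_one (hA.prod hB), integral_const, integral_const_mul,
    integral_indicator_one (measurable_snd hB), integral_const_mul,
    integral_indicator_one (measurable_fst hA), map_measureReal_apply measurable_snd hB,
    map_measureReal_apply measurable_fst hA, smul_eq_mul]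
  ring

section Hoeffding

variable {γ : Measure (ℝ × ℝ)}

lemma integrable_fst_mul_snd (h₁ : Integrable (fun ω : ℝ × ℝ => ω.1 ^ 2) γ)
    (h₂ : Integrable (fun ω : ℝ × ℝ => ω.2 ^ 2) γ) : Integrable (fun ω : ℝ × ℝ => ω.1 * ω.2) γ :=
  (h₁.add h₂).mono' (measurable_fst.mul measurable_snd).aestronglyMeasurable
    (ae_of_all _ fun ω => by
      rw [Real.norm_eq_abs, abs_mul, Pi.add_apply]
      nlinarith [sq_nonneg (|ω.1| - |ω.2|), sq_abs ω.1, sq_abs ω.2])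

lemma integrable_layer_mul_layer (h : Integrable (fun ω : ℝ × ℝ => ω.1 * ω.2) γ) :
    Integrable (Function.uncurry fun (ω z : ℝ × ℝ) => layer ω.1 z.1 * layer ω.2 z.2)
      (γ.prod (volume.prod volume)) := by
  have hm : Measurable (Function.uncurry fun (ω z : ℝ × ℝ) => layer ω.1 z.1 * layer ω.2 z.2) :=
    (measurable_layer.comp (measurable_fst.fst.prodMk measurable_snd.fst)).mul
      (measurable_layer.comp (measurable_fst.snd.prodMk measurable_snd.snd))
  refine (integrable_prod_iff hm.aestronglyMeasurable).2
    ⟨ae_of_all _ fun ω => (integrable_layer ω.1).mul_prod (integrable_layer ω.2),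
      h.norm.congr (ae_of_all _ fun ω => ?_)⟩
  simp only [Function.uncurry_apply_pair, norm_mul, Real.norm_eq_abs]
  rw [integral_prod_mul (fun s => |layer ω.1 s|) (fun t => |layer ω.2 t|), integral_abs_layer,
    integral_abs_layer]

lemma integral_fst_mul_snd_eq_integral_layer [SFinite γ]
    (h : Integrable (fun ω : ℝ × ℝ => ω.1 * ω.2) γ) :
    ∫ ω, ω.1 * ω.2 ∂γ = ∫ z, ∫ ω, layer ω.1 z.1 * layer ω.2 z.2 ∂γ ∂(volume.prod volume) := by
  rw [← integral_integral_swap (integrable_layer_mul_layer h)]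
  refine integral_congr_ae (ae_of_all _ fun ω => ?_)
  dsimp only
  rw [integral_prod_mul (layer ω.1) (layer ω.2), integral_layer, integral_layer]

end Hoeffding

section Coupling

variable {P Q : Measure ℝ} {γ : Measure (ℝ × ℝ)}

lemma integrable_fst_mul_snd_of_map (h₁ : γ.map Prod.fst = P) (h₂ : γ.map Prod.snd = Q)
    (hP : Integrable (fun x => x ^ 2) P) (hQ : Integrable (fun x => x ^ 2) Q) :
    Integrable (fun ω : ℝ × ℝ => ω.1 * ω.2) γ :=
  integrable_fst_mul_snd ((h₁ ▸ hP).comp_measurable measurable_fst)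
    ((h₂ ▸ hQ).comp_measurable measurable_snd)

lemma integral_sub_sq_eq (h₁ : γ.map Prod.fst = P) (h₂ : γ.map Prod.snd = Q)
    (hP : Integrable (fun x => x ^ 2) P) (hQ : Integrable (fun x => x ^ 2) Q) :
    ∫ ω, (ω.1 - ω.2) ^ 2 ∂γ = ∫ x, x ^ 2 ∂P + ∫ x, x ^ 2 ∂Q - 2 * ∫ ω, ω.1 * ω.2 ∂γ := by
  have hP' : Integrable (fun ω : ℝ × ℝ => ω.1 ^ 2) γ := (h₁ ▸ hP).comp_measurable measurable_fst
  have hQ' : Integrable (fun ω : ℝ × ℝ => ω.2 ^ 2) γ := (h₂ ▸ hQ).comp_measurable measurable_snd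
  have hPγ : ∫ x, x ^ 2 ∂P = ∫ ω, ω.1 ^ 2 ∂γ :=
    h₁ ▸ integral_map measurable_fst.aemeasurable (by fun_prop)
  have hQγ : ∫ x, x ^ 2 ∂Q = ∫ ω, ω.2 ^ 2 ∂γ :=
    h₂ ▸ integral_map measurable_snd.aemeasurable (by fun_prop)
  calc ∫ ω, (ω.1 - ω.2) ^ 2 ∂γ = ∫ ω, (ω.1 ^ 2 + ω.2 ^ 2 - 2 * (ω.1 * ω.2)) ∂γ :=
        integral_congr_ae (ae_of_all _ fun ω => by ring)
    _ = _ := by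
      rw [integral_sub (hP'.fun_add hQ')
          ((integrable_fst_mul_snd_of_map h₁ h₂ hP hQ).const_mul 2),
        integral_add hP' hQ', integral_const_mul, hPγ, hQγ]

variable [IsProbabilityMeasure P] [IsProbabilityMeasure Q] [IsProbabilityMeasure γ]

lemma integral_layer_mul_layer_le_quantileCoupling (h₁ : γ.map Prod.fst = P)
    (h₂ : γ.map Prod.snd = Q) (z : ℝ × ℝ) :
    ∫ ω, layer ω.1 z.1 * layer ω.2 z.2 ∂γ
      ≤ ∫ ω, layer ω.1 z.1 * layer ω.2 z.2 ∂quantileCoupling P Q := by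
  simp_rw [layer_eq_sub_indicator]
  rw [integral_sub_indicator_mul_sub_indicator _ _ _ measurableSet_Iic measurableSet_Iic,
    integral_sub_indicator_mul_sub_indicator _ _ _ measurableSet_Iic measurableSet_Iic,
    h₁, h₂, map_fst_quantileCoupling, map_snd_quantileCoupling, probReal_univ, probReal_univ]
  gcongr
  exact ENNReal.toReal_mono (measure_ne_top _ _) (le_quantileCoupling_Iic_prod_Iic h₁ h₂ _ _)

lemma integral_fst_mul_snd_le_quantileCoupling (h₁ : γ.map Prod.fst = P)
    (h₂ : γ.map Prod.snd = Q) (hP : Integrable (fun x => x ^ 2) P)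
    (hQ : Integrable (fun x => x ^ 2) Q) :
    ∫ ω, ω.1 * ω.2 ∂γ ≤ ∫ ω, ω.1 * ω.2 ∂quantileCoupling P Q := by
  have hγ := integrable_fst_mul_snd_of_map h₁ h₂ hP hQ
  have hq := integrable_fst_mul_snd_of_map map_fst_quantileCoupling map_snd_quantileCoupling hP hQ
  rw [integral_fst_mul_snd_eq_integral_layer hγ, integral_fst_mul_snd_eq_integral_layer hq]
  exact integral_mono (integrable_layer_mul_layer hγ).integral_prod_right
    (integrable_layer_mul_layer hq).integral_prod_right
    (integral_layer_mul_layer_le_quantileCoupling h₁ h₂)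

lemma integral_sub_sq_quantileCoupling_le (h₁ : γ.map Prod.fst = P) (h₂ : γ.map Prod.snd = Q)
    (hP : Integrable (fun x => x ^ 2) P) (hQ : Integrable (fun x => x ^ 2) Q) :
    ∫ ω, (ω.1 - ω.2) ^ 2 ∂quantileCoupling P Q ≤ ∫ ω, (ω.1 - ω.2) ^ 2 ∂γ := by
  rw [integral_sub_sq_eq h₁ h₂ hP hQ,
    integral_sub_sq_eq map_fst_quantileCoupling map_snd_quantileCoupling hP hQ]
  linarith [integral_fst_mul_snd_le_quantileCoupling h₁ h₂ hP hQ]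

end Coupling

lemma W2sq_eq_integral_quantileCoupling {P Q : Measure ℝ} [IsProbabilityMeasure P]
    [IsProbabilityMeasure Q] (hP : Integrable (fun x => x ^ 2) P)
    (hQ : Integrable (fun x => x ^ 2) Q) :
    W2sq P Q = ∫ ω, (ω.1 - ω.2) ^ 2 ∂quantileCoupling P Q :=
  IsLeast.csInf_eq ⟨⟨_, inferInstance, map_fst_quantileCoupling, map_snd_quantileCoupling, rfl⟩,
    by
      rintro r ⟨γ, hγ, h₁, h₂, rfl⟩
      exact integral_sub_sq_quantileCoupling_le h₁ h₂ hP hQ⟩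

/-- for Borel probability measures on ℝ with finite second moments,
`d_W²(P,Q) = ∫_0^1 (q_P(p) − q_Q(p))² dp`. -/
theorem stmt5 (P Q : Measure ℝ) [IsProbabilityMeasure P] [IsProbabilityMeasure Q]
    (hP : Integrable (fun x => x ^ 2) P) (hQ : Integrable (fun x => x ^ 2) Q) :
    W2sq P Q = ∫ p in (0:ℝ)..1, (quantileOf P p - quantileOf Q p) ^ 2 := by
  rw [W2sq_eq_integral_quantileCoupling hP hQ, quantileCoupling,
    integral_map aemeasurable_quantileOf_prodMk (by fun_prop),
    intervalIntegral.integral_of_le zero_le_one, integral_Ioc_eq_integral_Ioo]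
end
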